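/- Let f ∈ K[x₁,…,xₙ] be nonzero, α ∈ K^{n−1}, and αₙ ∈ K arbitrary. The integers v₁,…,v_{n−1} produced by the Lazard evaluation of f at α coincide with the first n−1 coordinates of the Lazard valuation v_{(α,αₙ)}(f). -/

import Mathlib

open MvPolynomial Polynomial

/-- The Lazard valuation of a polynomial `f` at a point `α`: the lexicographically
least exponent vector occurring in the expansion of `f` about `α`. -/
noncomputable def lazardVal {K : Type*} [CommRing K] {n : ℕ}
    (α : Fin n → K) (f : MvPolynomial (Fin n) K) : Lex (Fin n →₀ ℕ) :=
  WithTop.untopD (toLex 0) (((MvPolynomial.bind₁ (fun i => X i + MvPolynomial.C (α i)) f).support.image toLex).min)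

/-- One step of the Lazard evaluation process: view `f` as a polynomial in the first
variable, divide out the highest power of `(x₀ - a)` dividing it, then substitute
`x₀ = a`. -/
noncomputable def lazardStep {K : Type*} [Field K] {n : ℕ} (a : K)
    (f : MvPolynomial (Fin (n + 1)) K) : MvPolynomial (Fin n) K :=
  Polynomial.eval (MvPolynomial.C a)
    ((MvPolynomial.finSuccEquiv K n f) /ₘ
      ((Polynomial.X - Polynomial.C (MvPolynomial.C a)) ^
        ((MvPolynomial.finSuccEquiv K n f).rootMultiplicity (MvPolynomial.C a))))

/-- The exponents `v₁,…,vₙ` produced by the Lazard evaluation process. -/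
noncomputable def lazardExps {K : Type*} [Field K] :
    {n : ℕ} → MvPolynomial (Fin (n + 1)) K → (Fin n → K) → (Fin n → ℕ)
  | 0, _, _ => fun i => i.elim0
  | _ + 1, f, α =>
      Fin.cons ((MvPolynomial.finSuccEquiv K _ f).rootMultiplicity (MvPolynomial.C (α 0)))
        (lazardExps (lazardStep (α 0) f) (Fin.tail α))


/-!
Translating `(α, αₙ)` to the origin, the Lazard valuation becomes the lexicographically least
exponent of `g = f(x + (α, αₙ))`. Viewing `g` as a polynomial in `x₁` over `K[x₂, …]`, that
exponent is the trailing degree in `x₁` followed by the least exponent of the trailing coefficient.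
The trailing degree of `f(x₁ + α₁, …)` in `x₁` is the multiplicity of `α₁` as a root, and its
trailing coefficient is what one Lazard step produces (translated in the remaining variables), so
the claim follows by induction on `n`.
-/

namespace Finsupp

variable {n : ℕ} {M : Type*} [Zero M]

theorem toLex_cons_lt_toLex_cons_iff [LT M] {a b : M} {x y : Fin n →₀ M} :
    toLex (cons a x) < toLex (cons b y) ↔ a < b ∨ a = b ∧ toLex x < toLex y :=
  Fin.pi_lex_lt_cons_cons (α := fun _ => M) (x := ⇑x) (y := ⇑y) (· < ·)

theorem toLex_cons_le_toLex_cons [LinearOrder M] (a : M) {x y : Fin n →₀ M}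
    (h : toLex x ≤ toLex y) : toLex (cons a x) ≤ toLex (cons a y) := by
  rcases h.lt_or_eq with h | h
  · exact (toLex_cons_lt_toLex_cons_iff.mpr (.inr ⟨rfl, h⟩)).le
  · rw [toLex_inj.mp h]

end Finsupp

namespace Polynomial

variable {R S : Type*} [Semiring R] [Semiring S] {f : R →+* S}

theorem natTrailingDegree_map_of_injective (hf : Function.Injective f) (p : R[X]) :
    (p.map f).natTrailingDegree = p.natTrailingDegree := by
  simp only [natTrailingDegree, trailingDegree, support_map_of_injective p hf]

theorem trailingCoeff_map_of_injective (hf : Function.Injective f) (p : R[X]) :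
    (p.map f).trailingCoeff = f p.trailingCoeff := by
  rw [trailingCoeff, natTrailingDegree_map_of_injective hf, coeff_map, trailingCoeff]

end Polynomial

namespace MvPolynomial

section LexMinDegree

variable {R σ : Type*} [CommSemiring R] [LinearOrder σ]

/-- Takes the junk value `toLex 0` at `p = 0`. -/
noncomputable def lexMinDegree (p : MvPolynomial σ R) : Lex (σ →₀ ℕ) :=
  WithTop.untopD (toLex 0) (p.support.image toLex).min

@[simp]
theorem lexMinDegree_zero : lexMinDegree (0 : MvPolynomial σ R) = toLex 0 := by
  simp [lexMinDegree]

theorem lexMinDegree_eq_min' {p : MvPolynomial σ R} (hp : (p.support.image toLex).Nonempty) :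
    lexMinDegree p = (p.support.image toLex).min' hp := by
  rw [lexMinDegree, ← Finset.coe_min' hp, WithTop.untopD_coe]

theorem lexMinDegree_le {p : MvPolynomial σ R} {e : σ →₀ ℕ} (he : e ∈ p.support) :
    lexMinDegree p ≤ toLex e := by
  rw [lexMinDegree_eq_min' ⟨_, Finset.mem_image_of_mem _ he⟩]
  exact Finset.min'_le _ _ (Finset.mem_image_of_mem _ he)

theorem ofLex_lexMinDegree_mem_support {p : MvPolynomial σ R} (hp : p ≠ 0) :
    ofLex (lexMinDegree p) ∈ p.support := by
  have hne := (support_nonempty.mpr hp).image toLex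
  obtain ⟨e, he, hmin⟩ := Finset.mem_image.mp (Finset.min'_mem _ hne)
  rwa [lexMinDegree_eq_min' hne, ← hmin]

theorem lexMinDegree_eq_of_mem_support {p : MvPolynomial σ R} {d : σ →₀ ℕ}
    (hd : d ∈ p.support) (hmin : ∀ e ∈ p.support, toLex d ≤ toLex e) :
    lexMinDegree p = toLex d :=
  (lexMinDegree_le hd).antisymm <|
    hmin _ (ofLex_lexMinDegree_mem_support (support_nonempty.mp ⟨d, hd⟩))

theorem lexMinDegree_eq_cons {n : ℕ} (p : MvPolynomial (Fin (n + 1)) R) :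
    lexMinDegree p = toLex (Finsupp.cons (finSuccEquiv R n p).natTrailingDegree
      (ofLex (lexMinDegree (finSuccEquiv R n p).trailingCoeff))) := by
  by_cases hp : p = 0
  · simp [hp]
  set P := finSuccEquiv R n p
  have hP : P ≠ 0 := (EmbeddingLike.map_ne_zero_iff).mpr hp
  have hd := ofLex_lexMinDegree_mem_support (trailingCoeff_nonzero_iff_nonzero.mpr hP)
  refine lexMinDegree_eq_of_mem_support ?_ fun e he => ?_
  · rwa [mem_support_iff, ← finSuccEquiv_coeff_coeff, ← mem_support_iff]
  obtain ⟨k, e, rfl⟩ : ∃ k e', e = Finsupp.cons k e' := ⟨_, _, (Finsupp.cons_tail e).symm⟩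
  rw [mem_support_iff, ← finSuccEquiv_coeff_coeff, ← mem_support_iff] at he
  have hk : P.natTrailingDegree ≤ k :=
    natTrailingDegree_le_of_ne_zero (support_nonempty.mp ⟨_, he⟩)
  rcases hk.lt_or_eq with hk | rfl
  · exact (Finsupp.toLex_cons_lt_toLex_cons_iff.mpr (.inl hk)).le
  · exact Finsupp.toLex_cons_le_toLex_cons _ (lexMinDegree_le he)

end LexMinDegree

section Taylor

variable {R σ : Type*} [CommRing R]

/-- `taylor a f = f(x + a)`, the multivariate analogue of `Polynomial.taylor`. -/
noncomputable def taylor (a : σ → R) : MvPolynomial σ R →ₐ[R] MvPolynomial σ R :=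
  bind₁ fun i => X i + C (a i)

theorem taylor_neg_comp_taylor (a : σ → R) :
    (taylor (-a)).comp (taylor a) = AlgHom.id R (MvPolynomial σ R) :=
  algHom_ext fun i => by simp [taylor]

theorem taylor_injective (a : σ → R) : Function.Injective (taylor a) :=
  Function.LeftInverse.injective (g := taylor (-a))
    (AlgHom.congr_fun (taylor_neg_comp_taylor a))

theorem finSuccEquiv_taylor {n : ℕ} (a : R) (q : Fin n → R) (f : MvPolynomial (Fin (n + 1)) R) :
    finSuccEquiv R n (taylor (Fin.cons a q) f) =
      ((finSuccEquiv R n f).comp (Polynomial.X + Polynomial.C (C a))).map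
        (taylor q : MvPolynomial (Fin n) R →+* MvPolynomial (Fin n) R) := by
  induction f using MvPolynomial.induction_on with
  | C b => simp [taylor, finSuccEquiv_apply, algHom_C]
  | add f g hf hg => simp only [map_add, Polynomial.add_comp, Polynomial.map_add, hf, hg]
  | mul_X f i hf =>
    rw [map_mul, map_mul, map_mul, Polynomial.mul_comp, Polynomial.map_mul, hf]
    refine congrArg₂ (· * ·) rfl ?_
    cases i using Fin.cases with
    | zero => simp [taylor, finSuccEquiv_apply, algHom_C]
    | succ i => simp [taylor, finSuccEquiv_apply, Polynomial.C_comp]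

end Taylor

end MvPolynomial

section Lazard

variable {K : Type*} [Field K] {n : ℕ}

theorem lazardVal_eq_lexMinDegree_taylor (α : Fin n → K) (f : MvPolynomial (Fin n) K) :
    lazardVal α f = lexMinDegree (taylor α f) :=
  rfl

theorem lazardStep_eq_trailingCoeff (a : K) (f : MvPolynomial (Fin (n + 1)) K) :
    lazardStep a f =
      ((finSuccEquiv K n f).comp (Polynomial.X + Polynomial.C (MvPolynomial.C a))).trailingCoeff :=
  eval_divByMonic_eq_trailingCoeff_comp

theorem lazardVal_cons (a : K) (q : Fin n → K) (f : MvPolynomial (Fin (n + 1)) K) :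
    lazardVal (Fin.cons a q) f =
      toLex (Finsupp.cons ((finSuccEquiv K n f).rootMultiplicity (MvPolynomial.C a))
        (ofLex (lazardVal q (lazardStep a f)))) := by
  have hinj : Function.Injective (taylor q : MvPolynomial (Fin n) K →+* MvPolynomial (Fin n) K) :=
    taylor_injective q
  rw [lazardVal_eq_lexMinDegree_taylor, lexMinDegree_eq_cons, finSuccEquiv_taylor,
    natTrailingDegree_map_of_injective hinj, trailingCoeff_map_of_injective hinj,
    ← rootMultiplicity_eq_natTrailingDegree, ← lazardStep_eq_trailingCoeff]
  rfl

end Lazard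

theorem lazardExps_eq_lazardVal_general {K : Type*} [Field K] {n : ℕ}
    (f : MvPolynomial (Fin (n + 1)) K) (α : Fin n → K) (αn : K) :
    ∀ i : Fin n,
      lazardExps f α i = ofLex (lazardVal (Fin.snoc α αn) f) (Fin.castSucc i) := by
  induction n with
  | zero => exact fun i => i.elim0
  | succ n ih =>
    obtain ⟨a, q, rfl⟩ : ∃ a q, α = Fin.cons a q := ⟨_, _, (Fin.cons_self_tail α).symm⟩
    intro i
    rw [← Fin.cons_snoc_eq_snoc_cons, lazardVal_cons, lazardExps]
    cases i using Fin.cases with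
    | zero => simp
    | succ i => simpa [← Fin.succ_castSucc] using ih _ q i

/-- The exponents produced by the Lazard evaluation of `f` at `α ∈ Kⁿ` coincide with
the first `n` coordinates of the Lazard valuation of `f` at `(α, αₙ)`, for any
`αₙ ∈ K`. -/
theorem lazardExps_eq_lazardVal {K : Type*} [Field K] {n : ℕ}
    (f : MvPolynomial (Fin (n + 1)) K) (hf : f ≠ 0) (α : Fin n → K) (αn : K) :
    ∀ i : Fin n,
      lazardExps f α i = ofLex (lazardVal (Fin.snoc α αn) f) (Fin.castSucc i) :=
  lazardExps_eq_lazardVal_general f α αn
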